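/- Let d, k, N be integers with N ≥ d+1 > k+1 ≥ 2. Then Q_{d,k}(N) ≤ (2^d - 2^k)/(2^d - 1), with equality if and only if N = d+1. -/

import Mathlib

/-!
With `S n j = Σ_{i<j} C(n, i)` one has `Q d k (d + 1 + p) = 2^k S(d-k+p, d-k) / S(d+p, d)`, and
`S n n = 2^n - 1` makes the bound the value at `p = 0`; so it suffices that this ratio is strictly
decreasing in `p`. As `S(n+1, j+1) = 2 S(n, j+1) - C(n, j)`, one step in `p` decreases the ratio
exactly when `C(m, j) / S(m, j+1) > C(k+m, k+j) / S(k+m, k+j+1)`. This follows by comparing the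
two partial sums term by term, because `C(k+m, k+i) / C(m, i) = C(k+m, k) / C(k+i, k)` decreases
in `i`, while the extra terms `i < k` of `S(k+m, k+j+1)` make the inequality strict.
-/

open Filter Finset Real

/-- `Q d k N = 2^k · (Σ_{i=0}^{d-k-1} C(N-k-1, i)) / (Σ_{i=0}^{d-1} C(N-1, i))`,
the normalized expected `k`-face number `E f_k(C_N)/C(N,k)` of the Cover–Efron cone. -/
noncomputable def Q (d k N : ℕ) : ℝ :=
  2 ^ k * (∑ i ∈ Finset.range (d - k), ((N - k - 1).choose i : ℝ)) /
    (∑ i ∈ Finset.range d, ((N - 1).choose i : ℝ))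

theorem Nat.choose_mul_choose_add_le {m x y : ℕ} (k : ℕ) (hxy : x ≤ y) :
    m.choose x * (k + m).choose (k + y) ≤ m.choose y * (k + m).choose (k + x) := by
  have hmul (z : ℕ) :
      (k + m).choose (k + z) * (k + z).choose k = (k + m).choose k * m.choose z := by
    rw [Nat.choose_mul (Nat.le_add_right k z)]
    simp
  have hpos : 0 < (k + x).choose k * (k + y).choose k :=
    Nat.mul_pos (Nat.choose_pos (by omega)) (Nat.choose_pos (by omega))
  refine Nat.le_of_mul_le_mul_right ?_ hpos
  calc m.choose x * (k + m).choose (k + y) * ((k + x).choose k * (k + y).choose k)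
      = m.choose x * (k + x).choose k * ((k + m).choose (k + y) * (k + y).choose k) := by ring
    _ = (k + m).choose k * m.choose x * m.choose y * (k + x).choose k := by rw [hmul]; ring
    _ ≤ (k + m).choose k * m.choose x * m.choose y * (k + y).choose k :=
        Nat.mul_le_mul_left _ (Nat.choose_le_choose k (by omega))
    _ = m.choose y * (k + y).choose k * ((k + m).choose (k + x) * (k + x).choose k) := by
        rw [hmul]; ring
    _ = m.choose y * (k + m).choose (k + x) * ((k + x).choose k * (k + y).choose k) := by ring

def chooseSum (n j : ℕ) : ℕ :=
  ∑ i ∈ range j, n.choose i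

theorem chooseSum_pos {j : ℕ} (n : ℕ) (hj : 0 < j) : 0 < chooseSum n j :=
  Finset.sum_pos' (fun _ _ => Nat.zero_le _) ⟨0, mem_range.mpr hj, by simp⟩

theorem chooseSum_self_add_one (n : ℕ) : chooseSum n n + 1 = 2 ^ n := by
  rw [← Nat.sum_range_choose, sum_range_succ, Nat.choose_self, chooseSum]

theorem chooseSum_succ_succ_add_choose (n j : ℕ) :
    chooseSum (n + 1) (j + 1) + n.choose j = 2 * chooseSum n (j + 1) := by
  induction j with
  | zero => simp [chooseSum]
  | succ j ih =>
    simp only [chooseSum, sum_range_succ] at ih ⊢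
    have := Nat.choose_succ_succ' n j
    omega

theorem choose_mul_chooseSum_lt {m j k : ℕ} (hj : j ≤ m) (hk : 0 < k) :
    (k + m).choose (k + j) * chooseSum m (j + 1) < m.choose j * chooseSum (k + m) (k + j + 1) := by
  have hsplit : chooseSum (k + m) (k + j + 1)
      = chooseSum (k + m) k + ∑ i ∈ range (j + 1), (k + m).choose (k + i) := by
    rw [chooseSum, add_assoc, sum_range_add, chooseSum]
  have hterms : (k + m).choose (k + j) * chooseSum m (j + 1)
      ≤ ∑ i ∈ range (j + 1), m.choose j * (k + m).choose (k + i) := by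
    rw [chooseSum, mul_sum]
    refine sum_le_sum fun i hi => ?_
    rw [mul_comm]
    exact Nat.choose_mul_choose_add_le k (Nat.lt_succ_iff.mp (mem_range.mp hi))
  have hhead : 0 < m.choose j * chooseSum (k + m) k :=
    Nat.mul_pos (Nat.choose_pos hj) (chooseSum_pos _ hk)
  rw [hsplit, mul_add, mul_sum]
  omega

theorem chooseSum_succ_mul_lt {m j k : ℕ} (hj : j ≤ m) (hk : 0 < k) :
    chooseSum (m + 1) (j + 1) * chooseSum (k + m) (k + j + 1)
      < chooseSum m (j + 1) * chooseSum (k + m + 1) (k + j + 1) := by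
  have hA := chooseSum_succ_succ_add_choose m j
  have hB := chooseSum_succ_succ_add_choose (k + m) (k + j)
  have hkey := choose_mul_chooseSum_lt hj hk
  nlinarith

theorem Q_add_one_add {d k : ℕ} (hkd : k ≤ d) (p : ℕ) :
    Q d k (d + 1 + p) = 2 ^ k * (chooseSum (d - k + p) (d - k) : ℝ) / chooseSum (d + p) d := by
  rw [Q, show d + 1 + p - k - 1 = d - k + p by omega, show d + 1 + p - 1 = d + p by omega]
  simp only [chooseSum, Nat.cast_sum]

theorem Q_self_add_one {d k : ℕ} (hkd : k ≤ d) :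
    Q d k (d + 1) = ((2 : ℝ) ^ d - 2 ^ k) / ((2 : ℝ) ^ d - 1) := by
  have hself (n : ℕ) : (chooseSum n n : ℝ) = 2 ^ n - 1 := by
    rw [eq_sub_iff_add_eq]
    exact_mod_cast chooseSum_self_add_one n
  rw [← add_zero (d + 1), Q_add_one_add hkd, add_zero, add_zero, hself, hself, mul_sub, mul_one,
    ← pow_add, Nat.add_sub_cancel' hkd]

theorem Q_strictAnti {d k : ℕ} (hk : 0 < k) (hkd : k < d) :
    StrictAnti fun p => Q d k (d + 1 + p) := by
  obtain ⟨j, rfl⟩ : ∃ j, d = k + j + 1 := ⟨d - k - 1, by omega⟩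
  refine strictAnti_nat_of_succ_lt fun p => ?_
  have hstep := chooseSum_succ_mul_lt (m := j + 1 + p) (j := j) (by omega) hk
  rw [show k + (j + 1 + p) = k + j + 1 + p by ring] at hstep
  have hpos (n : ℕ) : (0 : ℝ) < chooseSum n (k + j + 1) :=
    Nat.cast_pos.mpr (chooseSum_pos n (by omega))
  simp only [Q_add_one_add hkd.le, show k + j + 1 - k = j + 1 by omega]
  rw [mul_div_assoc, mul_div_assoc, mul_lt_mul_iff_right₀ (by positivity),
    div_lt_div_iff₀ (hpos _) (hpos _)]
  exact_mod_cast hstep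

theorem Q_le_max (d k N : ℕ) (hk : 1 ≤ k) (hkd : k < d) (hdN : d + 1 ≤ N) :
    Q d k N ≤ ((2 : ℝ) ^ d - 2 ^ k) / ((2 : ℝ) ^ d - 1) ∧
      (Q d k N = ((2 : ℝ) ^ d - 2 ^ k) / ((2 : ℝ) ^ d - 1) ↔ N = d + 1) := by
  obtain ⟨p, rfl⟩ : ∃ p, N = d + 1 + p := ⟨N - (d + 1), by omega⟩
  have hanti := Q_strictAnti hk hkd
  have hle := hanti.le_iff_ge (a := p) (b := 0)
  have heq := hanti.injective.eq_iff (a := p) (b := 0)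
  simp only [add_zero] at hle heq
  rw [← Q_self_add_one hkd.le]
  exact ⟨hle.mpr p.zero_le, heq.trans (by omega)⟩
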